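/- arXiv:2211.00116 — 4 statements merged into one kernel-verified Lean document; each statement's English description precedes it below -/
import Mathlib

section
/- Let κ be a regular uncountable cardinal and let 𝒰 and 𝒱 be ultrafilters over κ. Suppose 𝒰 ≤_RK 𝒱 (𝒰 is Rudin–Keisler below 𝒱) and 𝒱 satisfies the Galvin property Gal(𝒱, κ, κ⁺). Then 𝒰 also satisfies the Galvin property Gal(𝒰, κ, κ⁺). -/
open Cardinal

/-- Galvin's property for an ultrafilter: every family of `lam`-many sets in `U`
admits a subfamily of size `κ` whose intersection is in `U`. -/
def GalU {σ : Type} (U : Ultrafilter σ) (κ lam : Cardinal.{0}) : Prop :=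
  ∀ (ι : Type) (A : ι → Set σ), #ι = lam → (∀ i, A i ∈ U) →
    ∃ I : Set ι, #(↥I) = κ ∧ (⋂ i ∈ I, A i) ∈ U

theorem stmt0 {σ : Type} {κ : Cardinal.{0}} (hreg : κ.IsRegular) (hunc : ℵ₀ < κ)
    (hσ : #σ = κ) (U V : Ultrafilter σ) (f : σ → σ)
    (hRK : ∀ X : Set σ, X ∈ U ↔ f ⁻¹' X ∈ V)
    (hV : GalU V κ (Order.succ κ)) :
    GalU U κ (Order.succ κ) := by
  intro ι A hι hA
  obtain ⟨I, hI, hmem⟩ := hV ι (fun i => f ⁻¹' (A i)) hι (fun i => (hRK (A i)).mp (hA i))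
  refine ⟨I, hI, (hRK _).mpr ?_⟩
  have : f ⁻¹' (⋂ i ∈ I, A i) = ⋂ i ∈ I, f ⁻¹' (A i) := by
    simp [Set.preimage_iInter]
  rw [this]; exact hmem
end

section
/- Let κ be a regular uncountable cardinal and let 𝒰, 𝒱 be ultrafilters over κ with 𝒰 ≤_RK 𝒱. If Gal(𝒰, κ, κ⁺) fails, then Gal(𝒱, κ, κ⁺) fails. -/
open Cardinal

theorem stmt1 {σ : Type} {κ : Cardinal.{0}} (hreg : κ.IsRegular) (hunc : ℵ₀ < κ)
    (hσ : #σ = κ) (U V : Ultrafilter σ) (f : σ → σ)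
    (hRK : ∀ X : Set σ, X ∈ U ↔ f ⁻¹' X ∈ V)
    (hU : ¬ GalU U κ (Order.succ κ)) :
    ¬ GalU V κ (Order.succ κ) := by
  intro hV
  apply hU
  intro ι A hι hA
  obtain ⟨I, hI, hmem⟩ := hV ι (fun i => f ⁻¹' (A i)) hι (fun i => (hRK (A i)).1 (hA i))
  refine ⟨I, hI, ?_⟩
  rw [hRK]
  simpa [Set.preimage_iInter] using hmem
end

section
/- Let κ be a regular uncountable cardinal and ℱ ⊆ 𝒫(κ) a κ-independent family. Then for any subfamily 𝒜 ⊆ ℱ of cardinality κ, the intersection ⋂𝒜 does not belong to the filter 𝒲_ℱ generated by ℱ via <κ-intersections. In particular, Gal(𝒲_ℱ, κ, |ℱ|) fails whenever |ℱ| ≥ κ⁺. -/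
open Cardinal

/-- `F` is a κ-independent family of subsets of `σ`. -/
def Indep {σ : Type} (κ : Cardinal.{0}) (F : Set (Set σ)) : Prop :=
  ∀ F₁ F₂ : Set (Set σ), F₁ ⊆ F → F₂ ⊆ F → Disjoint F₁ F₂ →
    #(↥F₁) < κ → #(↥F₂) < κ →
    ((⋂₀ F₁) ∩ (⋂ Y ∈ F₂, Yᶜ)).Nonempty

/-- The filter generated by `F` via `<κ`-intersections. -/
def WFam {σ : Type} (κ : Cardinal.{0}) (F : Set (Set σ)) : Set (Set σ) :=
  {X | ∃ A : Set (Set σ), A ⊆ F ∧ #(↥A) < κ ∧ ⋂₀ A ⊆ X}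

/-- Galvin's property for a (set-represented) filter. -/
def GalSet {σ : Type} (W : Set (Set σ)) (κ lam : Cardinal.{0}) : Prop :=
  ∀ (ι : Type) (A : ι → Set σ), #ι = lam → (∀ i, A i ∈ W) →
    ∃ I : Set ι, #(↥I) = κ ∧ (⋂ i ∈ I, A i) ∈ W

theorem stmt3 {σ : Type} {κ : Cardinal.{0}} (hreg : κ.IsRegular) (hunc : ℵ₀ < κ)
    (hσ : #σ = κ) (F : Set (Set σ)) (hF : Indep κ F) :
    (∀ A : Set (Set σ), A ⊆ F → #(↥A) = κ → ⋂₀ A ∉ WFam κ F) ∧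
      (Order.succ κ ≤ #(↥F) → ¬ GalSet (WFam κ F) κ #(↥F)) := by
  have hone : (1 : Cardinal) < κ := lt_trans one_lt_aleph0 hunc
  have part1 : ∀ A : Set (Set σ), A ⊆ F → #(↥A) = κ → ⋂₀ A ∉ WFam κ F := by
    rintro A hAF hA ⟨B, hBF, hBκ, hBA⟩
    obtain ⟨X, hXA, hXB⟩ : ∃ X ∈ A, X ∉ B := by
      by_contra h
      push_neg at h
      exact absurd (Cardinal.mk_le_mk_of_subset h) (by rw [hA]; exact hBκ.not_ge)
    obtain ⟨x, hx1, hx2⟩ := hF B {X} hBF (Set.singleton_subset_iff.2 (hAF hXA))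
      (Set.disjoint_singleton_right.2 hXB) hBκ
      (by rw [Cardinal.mk_singleton]; exact hone)
    simp only [Set.mem_iInter, Set.mem_singleton_iff, Set.mem_compl_iff,
      forall_eq] at hx2
    exact hx2 (hBA hx1 X hXA)
  refine ⟨part1, fun hsucc hGal => ?_⟩
  obtain ⟨I, hI, hmem⟩ := hGal ↥F (fun i => (i : Set σ)) rfl (fun i =>
    ⟨{(i : Set σ)}, Set.singleton_subset_iff.2 i.2,
      by rw [Cardinal.mk_singleton]; exact hone, by rw [Set.sInter_singleton]⟩)
  have himg : (⋂ i ∈ I, (i : Set σ)) = ⋂₀ (Subtype.val '' I) := by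
    rw [Set.sInter_image]
  have hcard : #(↥(Subtype.val '' I)) = κ := by
    rw [Cardinal.mk_image_eq Subtype.val_injective, hI]
  exact part1 (Subtype.val '' I)
    (by rintro _ ⟨i, _, rfl⟩; exact i.2) hcard (himg ▸ hmem)
end

section
/- Let κ be a regular uncountable cardinal with κ^{<κ} = κ. Then there exists a κ-complete filter ℱ on κ such that Gal(ℱ, κ, κ⁺) fails. -/
/-!
Hausdorff's construction: call a point a pair `(x, F)` with `x` a subset of `σ` of size `< κ`
and `F` a family of fewer than `κ` such sets, and send `X ⊆ σ` to the set of points with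
`X ∩ x ∈ F`. Given fewer than `κ` sets `X` and a further set `Y`, take `x` to contain a point of
each `X ∆ Y` and `F` the traces `X ∩ x`; then `(x, F)` lies in every image of an `X` but not in
that of `Y`, so the family is `κ`-independent. Since `κ ^< κ = κ` there are only `κ` points, so
the family lives on `σ`. In the `κ`-complete filter generated by `κ⁺` of these sets, an
intersection of `κ` of them contains an intersection of fewer than `κ` generators, hence one of its
own factors that is not among those generators, contradicting independence.
-/

open Cardinal

open Set

abbrev SmallSets (α : Type) (κ : Cardinal.{0}) : Type := {s : Set α // #s < κ}

theorem mk_smallSets_le {α : Type} {κ : Cardinal.{0}} (hκ : ℵ₀ ≤ κ) (hpow : κ ^< κ = κ)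
    (hα : #α ≤ κ) : #(SmallSets α κ) ≤ κ := by
  have hcover : {s : Set α | #s < κ} ⊆ ⋃ o : Iio κ.ord, {s | #s ≤ o.1.card} := fun s hs =>
    mem_iUnion.2 ⟨⟨(#s).ord, ord_lt_ord.2 hs⟩, by simp⟩
  have hpiece : ∀ o : Iio κ.ord, #{s : Set α | #s ≤ o.1.card} ≤ κ := fun o =>
    calc #{s : Set α | #s ≤ o.1.card} ≤ max #α ℵ₀ ^ o.1.card := mk_bounded_set_le α _
      _ ≤ κ ^ o.1.card := power_le_power_right (max_le hα hκ)
      _ ≤ κ ^< κ := le_powerlt κ (lt_ord.1 o.2)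
      _ = κ := hpow
  rw [← lift_le.{1}]
  calc lift.{1} #(SmallSets α κ) ≤ lift.{1} #(⋃ o : Iio κ.ord, {s : Set α | #s ≤ o.1.card}) :=
        lift_le.2 (mk_le_mk_of_subset hcover)
    _ ≤ lift.{0} #(Iio κ.ord) * ⨆ o : Iio κ.ord, lift.{1} #{s : Set α | #s ≤ o.1.card} :=
        mk_iUnion_le_lift _
    _ ≤ lift.{1} κ * lift.{1} κ := by
        gcongr
        · simp
        · exact ciSup_le' fun o => lift_le.2 (hpiece o)
    _ = lift.{1} κ := by rw [← lift_mul, mul_eq_self hκ]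

/-- The case `|B| = 1` of `κ`-independence (`⋂ A \ ⋃ B ≠ ∅` for disjoint subfamilies `A`, `B` of
size `< κ`), which is all that is needed. -/
def IsIndependent {ι β : Type} (κ : Cardinal.{0}) (A : ι → Set β) : Prop :=
  ∀ t : Set ι, #t < κ → ∀ j ∉ t, ¬ (⋂ i ∈ t, A i) ⊆ A j

def generatedFilter {ι β : Type} (κ : Cardinal.{0}) (A : ι → Set β) : Set (Set β) :=
  {Y | ∃ t : Set ι, #t < κ ∧ (⋂ i ∈ t, A i) ⊆ Y}

section IsIndependent

variable {ι ι' β γ : Type} {κ : Cardinal.{0}} {A : ι → Set β}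

theorem IsIndependent.comp (hA : IsIndependent κ A) {g : ι' → ι} (hg : Function.Injective g) :
    IsIndependent κ (A ∘ g) := by
  intro t ht j hj hsub
  refine hA (g '' t) (mk_image_le.trans_lt ht) (g j) (hg.mem_set_image.not.2 hj) ?_
  rwa [biInter_image]

theorem IsIndependent.preimage (hA : IsIndependent κ A) {f : γ → β} (hf : Function.Surjective f) :
    IsIndependent κ (fun i => f ⁻¹' A i) := by
  intro t ht j hj hsub
  rw [← preimage_iInter₂, hf.preimage_subset_preimage_iff] at hsub
  exact hA t ht j hj hsub

theorem univ_mem_generatedFilter (hκ : 0 < κ) : Set.univ ∈ generatedFilter κ A :=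
  ⟨∅, by simpa using hκ, subset_univ _⟩

theorem mem_generatedFilter_of_superset {X Y : Set β} (hX : X ∈ generatedFilter κ A)
    (hXY : X ⊆ Y) : Y ∈ generatedFilter κ A :=
  let ⟨t, ht, hsub⟩ := hX
  ⟨t, ht, hsub.trans hXY⟩

theorem sInter_mem_generatedFilter (hκ : κ.IsRegular) {S : Set (Set β)}
    (hS : S ⊆ generatedFilter κ A) (hSκ : #S < κ) : ⋂₀ S ∈ generatedFilter κ A := by
  choose t ht hsub using fun Y : S => hS Y.2
  refine ⟨⋃ Y, t Y, mk_iUnion_le_sum_mk.trans_lt (sum_lt_of_isRegular hκ hSκ ht), ?_⟩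
  exact subset_sInter fun Y hY =>
    (biInter_mono (subset_iUnion t ⟨Y, hY⟩) fun _ _ => le_rfl).trans (hsub ⟨Y, hY⟩)

theorem IsIndependent.empty_not_mem_generatedFilter (hA : IsIndependent κ A) (hι : κ ≤ #ι) :
    ∅ ∉ generatedFilter κ A := by
  rintro ⟨t, ht, hsub⟩
  obtain ⟨j, hj⟩ : ∃ j, j ∉ t := by
    by_contra! h
    exact (ht.trans_le hι).ne (by rw [eq_univ_of_forall h, mk_univ])
  exact hA t ht j hj (hsub.trans (empty_subset _))

theorem IsIndependent.not_galSet (hA : IsIndependent κ A) (hκ : 1 < κ) {lam : Cardinal.{0}}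
    (hι : #ι = lam) : ¬ GalSet (generatedFilter κ A) κ lam := by
  intro hGal
  obtain ⟨I, hI, t, ht, hsub⟩ := hGal ι A hι fun i => ⟨{i}, by simpa using hκ, by simp⟩
  obtain ⟨j, hjI, hjt⟩ : ∃ j ∈ I, j ∉ t := by
    by_contra! h
    exact (mk_le_mk_of_subset h).not_gt (hI ▸ ht)
  exact hA t ht j hjt (hsub.trans (biInter_subset_of_mem hjI))

end IsIndependent

def SmallSets.inter {α : Type} {κ : Cardinal.{0}} (X : Set α) (x : SmallSets α κ) :
    SmallSets α κ :=
  ⟨X ∩ x.1, (mk_le_mk_of_subset inter_subset_right).trans_lt x.2⟩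

abbrev HausdorffPoint (α : Type) (κ : Cardinal.{0}) : Type :=
  SmallSets α κ × SmallSets (SmallSets α κ) κ

def hausdorffSet {α : Type} (κ : Cardinal.{0}) (X : Set α) : Set (HausdorffPoint α κ) :=
  {p | p.1.inter X ∈ p.2.1}

theorem isIndependent_hausdorffSet {α : Type} (κ : Cardinal.{0}) :
    IsIndependent κ (hausdorffSet (α := α) κ) := by
  intro t ht Y hY hsub
  have hsep : ∀ X : t, (symmDiff X.1 Y).Nonempty := fun X =>
    nonempty_iff_ne_empty.2 fun h => hY (symmDiff_eq_bot.1 h ▸ X.2)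
  choose c hc using hsep
  let x : SmallSets α κ := ⟨range c, mk_range_le.trans_lt ht⟩
  let F : SmallSets (SmallSets α κ) κ :=
    ⟨range fun X : t => x.inter X.1, mk_range_le.trans_lt ht⟩
  have hxF : ((x, F) : HausdorffPoint α κ) ∈ ⋂ X ∈ t, hausdorffSet κ X :=
    mem_iInter₂.2 fun X hX => ⟨⟨X, hX⟩, rfl⟩
  obtain ⟨X, hXY⟩ := hsub hxF
  have hXY' : X.1 ∩ range c = Y ∩ range c := congrArg Subtype.val hXY
  have hcX : c X ∈ range c := mem_range_self X
  rcases mem_symmDiff.1 (hc X) with ⟨hX, hnY⟩ | ⟨hY, hnX⟩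
  · exact hnY (hXY' ▸ ⟨hX, hcX⟩ : c X ∈ Y ∩ range c).1
  · exact hnX (hXY'.symm ▸ ⟨hY, hcX⟩ : c X ∈ X.1 ∩ range c).1

theorem mk_hausdorffPoint_le {α : Type} {κ : Cardinal.{0}} (hκ : ℵ₀ ≤ κ) (hpow : κ ^< κ = κ)
    (hα : #α ≤ κ) : #(HausdorffPoint α κ) ≤ κ := by
  have hsmall := mk_smallSets_le hκ hpow hα
  calc #(HausdorffPoint α κ) ≤ κ * κ := by
        rw [mk_prod, lift_id, lift_id]
        exact mul_le_mul' hsmall (mk_smallSets_le hκ hpow hsmall)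
    _ = κ := mul_eq_self hκ

theorem stmt7_general {σ : Type} {κ : Cardinal.{0}} (hreg : κ.IsRegular)
    (hpow : κ ^< κ = κ) (hσ : #σ = κ) :
    ∃ F : Set (Set σ),
      Set.univ ∈ F ∧ ∅ ∉ F ∧
      (∀ X ∈ F, ∀ Y : Set σ, X ⊆ Y → Y ∈ F) ∧
      (∀ S : Set (Set σ), S ⊆ F → #(↥S) < κ → ⋂₀ S ∈ F) ∧
      ¬ GalSet F κ (Order.succ κ) := by
  have hκ := hreg.aleph0_le
  obtain ⟨e⟩ : Nonempty (HausdorffPoint σ κ ↪ σ) :=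
    (le_def _ _).1 ((mk_hausdorffPoint_le hκ hpow hσ.le).trans hσ.ge)
  have hκpos : 0 < κ := aleph0_pos.trans_le hκ
  have : Nonempty (HausdorffPoint σ κ) := ⟨(⟨∅, by simpa⟩, ⟨∅, by simpa⟩)⟩
  obtain ⟨g⟩ : Nonempty ((Order.succ κ).out ↪ Set σ) := by
    rw [← le_def, mk_out, mk_set, hσ]
    exact Order.succ_le_of_lt (cantor κ)
  have hA : IsIndependent κ fun i => Function.invFun e ⁻¹' hausdorffSet κ (g i) :=
    ((isIndependent_hausdorffSet κ).comp g.injective).preimage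
      (Function.invFun_surjective e.injective)
  exact ⟨generatedFilter κ _, univ_mem_generatedFilter hκpos,
    hA.empty_not_mem_generatedFilter (by rw [mk_out]; exact Order.le_succ κ),
    fun X hX Y => mem_generatedFilter_of_superset hX,
    fun S => sInter_mem_generatedFilter hreg,
    hA.not_galSet (one_lt_aleph0.trans_le hκ) (mk_out _)⟩

theorem stmt7 {σ : Type} {κ : Cardinal.{0}} (hreg : κ.IsRegular) (hunc : ℵ₀ < κ)
    (hpow : κ ^< κ = κ) (hσ : #σ = κ) :
    ∃ F : Set (Set σ),
      Set.univ ∈ F ∧ ∅ ∉ F ∧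
      (∀ X ∈ F, ∀ Y : Set σ, X ⊆ Y → Y ∈ F) ∧
      (∀ S : Set (Set σ), S ⊆ F → #(↥S) < κ → ⋂₀ S ∈ F) ∧
      ¬ GalSet F κ (Order.succ κ) :=
  stmt7_general hreg hpow hσ
end
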